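/- arXiv:2210.14467 — 4 statements merged into one kernel-verified Lean document; each statement's English description precedes it below -/
import Mathlib

section
/- Let H be a real inner product space, let δ, m, h ∈ H with ⟨δ, m⟩ = ‖δ‖², and let ((β_ι), (v_ι), B) be an ℓ¹-representation of h by unit vectors with B > 0. Then (‖δ‖² − ‖m − h‖²) / (2B) ≤ sup_{ι∈ℕ} |⟨δ, v_ι⟩|, where the supremum is finite because |⟨δ, v_ι⟩| ≤ ‖δ‖ for every ι by the Cauchy–Schwarz inequality. -/
/-!
Since `⟪δ, m⟫ = ‖δ‖²`, we have `⟪δ, m - h⟫ = ‖δ‖² - ⟪δ, h⟫`, and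
Cauchy–Schwarz with AM–GM bounds the left side by `(‖δ‖² + ‖m - h‖²) / 2`; hence `‖δ‖² - ‖m - h‖² ≤ 2 ⟪δ, h⟫`.
Expanding `h = Σ β_ι v_ι` gives
`⟪δ, h⟫ = Σ β_ι ⟪δ, v_ι⟫ ≤ B · sup_ι |⟪δ, v_ι⟫|`.
-/

open scoped RealInnerProductSpace

section

variable {H : Type*} [NormedAddCommGroup H] [InnerProductSpace ℝ H]

theorem sq_norm_sub_sq_norm_sub_le_two_inner {δ m : H} (hδm : ⟪δ, m⟫ = ‖δ‖ ^ 2) (h : H) :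
    ‖δ‖ ^ 2 - ‖m - h‖ ^ 2 ≤ 2 * ⟪δ, h⟫ := by
  have hcs : ‖δ‖ ^ 2 - ⟪δ, h⟫ ≤ ‖δ‖ * ‖m - h‖ := by
    rw [← hδm, ← inner_sub_right]
    exact real_inner_le_norm δ (m - h)
  nlinarith [sq_nonneg (‖δ‖ - ‖m - h‖)]

theorem bddAbove_range_abs_inner_of_norm_le_one {ι : Type*} (δ : H) {v : ι → H}
    (hv : ∀ i, ‖v i‖ ≤ 1) : BddAbove (Set.range fun i => |⟪δ, v i⟫|) := by
  refine ⟨‖δ‖, ?_⟩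
  rintro _ ⟨i, rfl⟩
  calc |⟪δ, v i⟫| ≤ ‖δ‖ * ‖v i‖ := abs_real_inner_le_norm δ (v i)
    _ ≤ ‖δ‖ := mul_le_of_le_one_right (norm_nonneg δ) (hv i)

theorem inner_le_mul_iSup_abs_inner_of_hasSum {ι : Type*} {δ h : H} {β : ι → ℝ} {v : ι → H}
    {B : ℝ} (hβ : ∀ i, 0 ≤ β i) (hBsum : HasSum β B) (hrep : HasSum (fun i => β i • v i) h)
    (hbdd : BddAbove (Set.range fun i => |⟪δ, v i⟫|)) :
    ⟪δ, h⟫ ≤ B * ⨆ i, |⟪δ, v i⟫| := by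
  have hinner : HasSum (fun i => β i * ⟪δ, v i⟫) ⟪δ, h⟫ := by
    simpa only [map_smul, smul_eq_mul, innerSL_apply_apply] using (innerSL ℝ δ).hasSum hrep
  refine hasSum_le (fun i => ?_) hinner (hBsum.mul_right _)
  exact mul_le_mul_of_nonneg_left ((le_abs_self _).trans (le_ciSup hbdd i)) (hβ i)

end

/-- Inequality (Math22) in the proof of Theorem 2: if `δ` is a residual
(`⟪δ, m⟫ = ‖δ‖²`) and `h` has an ℓ¹-representation `h = Σ β_ι v_ι` by unit vectors
with `Σ β_ι = B > 0`, then `(‖δ‖² - ‖m - h‖²) / (2B) ≤ sup_ι |⟪δ, v_ι⟫|`. -/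
theorem stmt2 {H : Type*} [NormedAddCommGroup H] [InnerProductSpace ℝ H]
    (δ m h : H) (hδm : ⟪δ, m⟫ = ‖δ‖ ^ 2)
    (β : ℕ → ℝ) (v : ℕ → H) (B : ℝ)
    (hβ : ∀ ι, 0 ≤ β ι) (hBsum : HasSum β B) (hv : ∀ ι, ‖v ι‖ = 1)
    (hrep : HasSum (fun ι => β ι • v ι) h) (hBpos : 0 < B) :
    (‖δ‖ ^ 2 - ‖m - h‖ ^ 2) / (2 * B) ≤ ⨆ ι : ℕ, |⟪δ, v ι⟫| := by
  have hbdd := bddAbove_range_abs_inner_of_norm_le_one δ fun ι => (hv ι).le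
  have hgap := sq_norm_sub_sq_norm_sub_le_two_inner hδm h
  have hinner := inner_le_mul_iSup_abs_inner_of_hasSum hβ hBsum hrep hbdd
  rw [div_le_iff₀ (by positivity)]
  linarith
end

section
/- Let H be a real inner product space, let m, m' ∈ H, let α ∈ [0, 1], and let ((β_ι), (v_ι), B) be an ℓ¹-representation of h ∈ H by unit vectors. Then the series Σ_{ι=0}^∞ β_ι · ‖m − α·m' − ((1 − α)·B)·v_ι‖² converges and Σ_{ι=0}^∞ β_ι · ‖m − α·m' − ((1 − α)·B)·v_ι‖² ≤ B · ( α·‖m − m'‖² + (1 − α)·‖m − h‖² + (1 − α)²·B² ). -/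
open RealInnerProductSpace

/-!
Writing `x = m - α m'`, each term expands as `‖x‖² - 2(1-α)B⟪x, v_ι⟫ + (1-α)²B²`, so the
weighted sum equals `B (‖x‖² - 2(1-α)⟪x, h⟫ + (1-α)²B²)`. Completing the square,
`‖x‖² - 2(1-α)⟪x, h⟫ ≤ ‖x - (1-α)h‖²`, and `x - (1-α)h = α(m - m') + (1-α)(m - h)`, whose
squared norm is at most `α‖m - m'‖² + (1-α)‖m - h‖²` by convexity of `‖·‖²`.
-/

theorem norm_smul_add_one_sub_smul_sq_le {E : Type*} [SeminormedAddCommGroup E]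
    [NormedSpace ℝ E] (a b : E) {α : ℝ} (hα0 : 0 ≤ α) (hα1 : α ≤ 1) :
    ‖α • a + (1 - α) • b‖ ^ 2 ≤ α * ‖a‖ ^ 2 + (1 - α) * ‖b‖ ^ 2 :=
  (convexOn_univ_norm.pow (fun _ _ => norm_nonneg _) 2).2 (Set.mem_univ a) (Set.mem_univ b)
    hα0 (sub_nonneg.2 hα1) (add_sub_cancel α 1)

section InnerProductSpace

variable {H : Type*} [NormedAddCommGroup H] [InnerProductSpace ℝ H]

theorem norm_sq_sub_two_mul_inner_le (x y : H) (t : ℝ) :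
    ‖x‖ ^ 2 - 2 * t * ⟪x, y⟫ ≤ ‖x - t • y‖ ^ 2 := by
  rw [norm_sub_sq_real, real_inner_smul_right, norm_smul, Real.norm_eq_abs, mul_pow, sq_abs]
  nlinarith [mul_nonneg (sq_nonneg t) (sq_nonneg ‖y‖)]

theorem hasSum_mul_norm_sub_smul_sq {ι : Type*} {β : ι → ℝ} {v : ι → H} {B : ℝ} {h : H}
    (hβ : HasSum β B) (hv : ∀ i, ‖v i‖ = 1) (hrep : HasSum (fun i => β i • v i) h)
    (x : H) (c : ℝ) :
    HasSum (fun i => β i * ‖x - c • v i‖ ^ 2) (B * (‖x‖ ^ 2 + c ^ 2) - 2 * c * ⟪x, h⟫) := by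
  have hinner : HasSum (fun i => β i * ⟪x, v i⟫) ⟪x, h⟫ := by
    simpa only [innerSL_apply_apply, real_inner_smul_right] using hrep.mapL (innerSL ℝ x)
  have hterm (i : ι) : β i * ‖x - c • v i‖ ^ 2
      = β i * (‖x‖ ^ 2 + c ^ 2) - 2 * c * (β i * ⟪x, v i⟫) := by
    rw [norm_sub_sq_real, real_inner_smul_right, norm_smul, hv i, Real.norm_eq_abs, mul_one,
      sq_abs]
    ring
  simpa only [hterm] using (hβ.mul_right (‖x‖ ^ 2 + c ^ 2)).sub (hinner.mul_left (2 * c))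

end InnerProductSpace

/-- The weighted-average one-step bound (from (RGAproof2a)–(RGAproof2c)) used in the
relaxed-greedy part of the proof of Theorem 2: for `h` with ℓ¹-representation
`h = Σ β_ι v_ι` by unit vectors with `Σ β_ι = B`, and any `α ∈ [0,1]`,
`Σ_ι β_ι ‖m - α m' - (1-α)B v_ι‖² ≤ B (α‖m - m'‖² + (1-α)‖m - h‖² + (1-α)²B²)`. -/
theorem stmt3 {H : Type*} [NormedAddCommGroup H] [InnerProductSpace ℝ H]
    (m m' h : H) (α : ℝ) (hα0 : 0 ≤ α) (hα1 : α ≤ 1)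
    (β : ℕ → ℝ) (v : ℕ → H) (B : ℝ)
    (hβ : ∀ ι, 0 ≤ β ι) (hBsum : HasSum β B) (hv : ∀ ι, ‖v ι‖ = 1)
    (hrep : HasSum (fun ι => β ι • v ι) h) :
    Summable (fun ι => β ι * ‖m - α • m' - ((1 - α) * B) • v ι‖ ^ 2) ∧
      ∑' ι, β ι * ‖m - α • m' - ((1 - α) * B) • v ι‖ ^ 2 ≤
        B * (α * ‖m - m'‖ ^ 2 + (1 - α) * ‖m - h‖ ^ 2 + (1 - α) ^ 2 * B ^ 2) := by
  have hsum := hasSum_mul_norm_sub_smul_sq hBsum hv hrep (m - α • m') ((1 - α) * B)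
  refine ⟨hsum.summable, hsum.tsum_eq ▸ ?_⟩
  have key : ‖m - α • m'‖ ^ 2 - 2 * (1 - α) * ⟪m - α • m', h⟫
      ≤ α * ‖m - m'‖ ^ 2 + (1 - α) * ‖m - h‖ ^ 2 :=
    calc _ ≤ ‖m - α • m' - (1 - α) • h‖ ^ 2 := norm_sq_sub_two_mul_inner_le _ _ _
      _ = ‖α • (m - m') + (1 - α) • (m - h)‖ ^ 2 := by congr 2; module
      _ ≤ _ := norm_smul_add_one_sub_smul_sq_le _ _ hα0 hα1
  linear_combination mul_le_mul_of_nonneg_left key (hBsum.nonneg hβ)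
end

section
/- Let H be a real inner product space, m ∈ H, and let (m_k)_{k≥0} be a sequence in H with m_0 = 0; write δ_k = m − m_k. Let ((β_ι), (v_ι), B) be an ℓ¹-representation of h ∈ H by unit vectors with B > 0. Assume: (i) ⟨m − m_k, m_k⟩ = 0 for every k ≥ 0, and (ii) for every k ≥ 1 and every ι ∈ ℕ, ‖δ_k‖² ≤ ‖δ_{k-1}‖² − ⟨δ_{k-1}, v_ι⟩². Then for every k ≥ 1, ‖m − m_k‖² ≤ ‖m − h‖² + 4B² / (k + 1). -/
/-!
Write `e k = ‖m - M k‖² - ‖m - h‖²`. Orthogonality of the residual `δ = m - M k` to `M k`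
gives `e k ≤ 2⟪δ, h⟫`, and since `h = Σ β_ι v_ι` is a weighted average (with total weight `B`)
of the `B v_ι`, some `ι` has `⟪δ, h⟫ ≤ B ⟪δ, v ι⟫`. The greedy step therefore gives
`e (k+1) ≤ e k - (e k)² / (4B²)` whenever `e k ≥ 0`, and this recursion forces
`e k ≤ 4B² / (k+1)`.
-/

open scoped RealInnerProductSpace

theorem exists_le_mul_of_hasSum {ι : Type*} {β x : ι → ℝ} {B s : ℝ}
    (hβ : ∀ i, 0 ≤ β i) (hB : 0 < B) (hβB : HasSum β B) (hs : HasSum (fun i => β i * x i) s) :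
    ∃ i, s ≤ B * x i := by
  by_contra! hlt
  obtain ⟨i₀, hi₀⟩ : ∃ i, 0 < β i := by
    by_contra! hzero
    have : β = 0 := funext fun i => le_antisymm (hzero i) (hβ i)
    subst this
    exact hB.ne' (hβB.unique hasSum_zero)
  have hx : ∀ i, x i < s / B := fun i => by rw [lt_div_iff₀ hB]; linarith [hlt i]
  have hsum : HasSum (fun i => β i * (s / B)) s := by
    simpa [mul_div_cancel₀ _ hB.ne'] using hβB.mul_right (s / B)
  exact lt_irrefl s <| hasSum_lt (fun i => mul_le_mul_of_nonneg_left (hx i).le (hβ i))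
    (mul_lt_mul_of_pos_left (hx i₀) hi₀) hs hsum

theorem exists_inner_le_mul_inner_of_hasSum {E ι : Type*} [NormedAddCommGroup E]
    [InnerProductSpace ℝ E] {β : ι → ℝ} {v : ι → E} {B : ℝ} {h : E}
    (hβ : ∀ i, 0 ≤ β i) (hB : 0 < B) (hβB : HasSum β B) (hrep : HasSum (fun i => β i • v i) h)
    (g : E) : ∃ i, ⟪g, h⟫ ≤ B * ⟪g, v i⟫ :=
  exists_le_mul_of_hasSum hβ hB hβB <| by
    simpa [real_inner_smul_right] using (innerSL ℝ g).hasSum hrep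

theorem sq_norm_sub_le_add_two_inner_of_inner_eq_zero {E : Type*} [NormedAddCommGroup E]
    [InnerProductSpace ℝ E] {m p : E} (h : E) (horth : ⟪m - p, p⟫ = 0) :
    ‖m - p‖ ^ 2 ≤ ‖m - h‖ ^ 2 + 2 * ⟪m - p, h⟫ := by
  have hexpand : ‖m - h‖ ^ 2 = ‖m - p‖ ^ 2 - 2 * ⟪m - p, h⟫ + ‖h - p‖ ^ 2 := by
    rw [show m - h = (m - p) - (h - p) by abel, norm_sub_sq_real, inner_sub_right, horth]
    ring
  linarith [sq_nonneg ‖h - p‖]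

theorem sub_sq_div_le_sub_sq_div {x c C : ℝ} (hC : 0 < C) (hxc : x ≤ c) (hsum : x + c ≤ C) :
    x - x ^ 2 / C ≤ c - c ^ 2 / C := by
  have hfactor : (c - c ^ 2 / C) - (x - x ^ 2 / C) = (c - x) * (C - (x + c)) / C := by
    field_simp
    ring
  rw [← sub_nonneg, hfactor]
  exact div_nonneg (mul_nonneg (by linarith) (by linarith)) hC.le

theorem le_div_add_one_of_le_sub_sq_div {a : ℕ → ℝ} {C : ℝ} (hC : 0 < C)
    (hmono : ∀ k, a (k + 1) ≤ a k) (hrec : ∀ k, 0 ≤ a k → a (k + 1) ≤ a k - a k ^ 2 / C) :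
    ∀ k, 1 ≤ k → a k ≤ C / (k + 1) := by
  have hstep : ∀ k c, 0 ≤ c → a k ≤ c → 2 * c ≤ C → a (k + 1) ≤ c - c ^ 2 / C := by
    intro k c hc hak hcC
    rcases lt_or_ge (a k) 0 with hneg | hnonneg
    · have : c ^ 2 / C ≤ c := by
        rw [div_le_iff₀ hC]; nlinarith
      linarith [hmono k]
    · exact (hrec k hnonneg).trans (sub_sq_div_le_sub_sq_div hC hak (by linarith))
  intro k hk
  induction k, hk using Nat.le_induction with
  | base =>
    rcases lt_or_ge (a 0) 0 with hneg | hnonneg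
    · have : 0 < C / ((1 : ℕ) + 1 : ℝ) := by positivity
      linarith [hmono 0]
    · have hquarter : C / 4 - (a 0 - a 0 ^ 2 / C) = (2 * a 0 - C) ^ 2 / (4 * C) := by
        field_simp
        ring
      have : 0 ≤ (2 * a 0 - C) ^ 2 / (4 * C) := by positivity
      have : C / 4 ≤ C / ((1 : ℕ) + 1 : ℝ) :=
        div_le_div_of_nonneg_left hC.le (by norm_num) (by norm_num)
      linarith [hrec 0 hnonneg]
  | succ k hk ih =>
    have hk1 : (1 : ℝ) ≤ k := by exact_mod_cast hk
    refine (hstep k _ (by positivity) ih ?_).trans ?_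
    · rw [mul_div_assoc', div_le_iff₀ (by positivity)]; nlinarith
    · have hsimp : C / (k + 1) - (C / (k + 1)) ^ 2 / C = C * k / (k + 1) ^ 2 := by
        field_simp
        ring
      rw [hsimp, div_le_div_iff₀ (by positivity) (by positivity)]
      push_cast
      nlinarith

theorem stmt5_general {H : Type*} [NormedAddCommGroup H] [InnerProductSpace ℝ H]
    (m : H) (M : ℕ → H)
    (h : H) (β : ℕ → ℝ) (v : ℕ → H) (B : ℝ)
    (hβ : ∀ ι, 0 ≤ β ι) (hBsum : HasSum β B)
    (hrep : HasSum (fun ι => β ι • v ι) h) (hBpos : 0 < B)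
    (horth : ∀ k : ℕ, ⟪m - M k, M k⟫ = 0)
    (hstep : ∀ k : ℕ, 1 ≤ k → ∀ ι : ℕ,
      ‖m - M k‖ ^ 2 ≤ ‖m - M (k - 1)‖ ^ 2 - ⟪m - M (k - 1), v ι⟫ ^ 2) :
    ∀ k : ℕ, 1 ≤ k → ‖m - M k‖ ^ 2 ≤ ‖m - h‖ ^ 2 + 4 * B ^ 2 / ((k : ℝ) + 1) := by
  set e : ℕ → ℝ := fun k => ‖m - M k‖ ^ 2 - ‖m - h‖ ^ 2
  have hnext (k : ℕ) (ι : ℕ) : ‖m - M (k + 1)‖ ^ 2 ≤ ‖m - M k‖ ^ 2 - ⟪m - M k, v ι⟫ ^ 2 :=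
    hstep (k + 1) k.succ_pos ι
  have hmono (k : ℕ) : e (k + 1) ≤ e k := by
    linarith [hnext k 0, sq_nonneg ⟪m - M k, v 0⟫]
  have hrec (k : ℕ) (hk : 0 ≤ e k) : e (k + 1) ≤ e k - e k ^ 2 / (4 * B ^ 2) := by
    obtain ⟨ι, hι⟩ := exists_inner_le_mul_inner_of_hasSum hβ hBpos hBsum hrep (m - M k)
    have hek : e k ≤ 2 * ⟪m - M k, h⟫ := by
      linarith [sq_norm_sub_le_add_two_inner_of_inner_eq_zero h (horth k)]
    have hsq : e k ^ 2 / (4 * B ^ 2) ≤ ⟪m - M k, v ι⟫ ^ 2 := by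
      rw [div_le_iff₀ (by positivity)]
      calc e k ^ 2 ≤ (2 * B * ⟪m - M k, v ι⟫) ^ 2 := pow_le_pow_left₀ hk (by linarith) 2
        _ = ⟪m - M k, v ι⟫ ^ 2 * (4 * B ^ 2) := by ring
    linarith [hnext k ι]
  intro k hk
  linarith [le_div_add_one_of_le_sub_sq_div (by positivity) hmono hrec k hk]

/-- Deterministic core of Theorem 2 (for rPPR.oga and rPPR.aga): if `m_0 = 0`, each
residual `δ_k = m - m_k` is orthogonal to `m_k`, and each greedy step reduces the
squared residual by at least the squared inner product with every dictionary element
`v_ι` of an ℓ¹-representation `h = Σ β_ι v_ι` (unit vectors, `Σ β_ι = B > 0`), then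
`‖m - m_k‖² ≤ ‖m - h‖² + 4B²/(k+1)` for every `k ≥ 1`. -/
theorem stmt5 {H : Type*} [NormedAddCommGroup H] [InnerProductSpace ℝ H]
    (m : H) (M : ℕ → H) (hM0 : M 0 = 0)
    (h : H) (β : ℕ → ℝ) (v : ℕ → H) (B : ℝ)
    (hβ : ∀ ι, 0 ≤ β ι) (hBsum : HasSum β B) (hv : ∀ ι, ‖v ι‖ = 1)
    (hrep : HasSum (fun ι => β ι • v ι) h) (hBpos : 0 < B)
    (horth : ∀ k : ℕ, ⟪m - M k, M k⟫ = 0)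
    (hstep : ∀ k : ℕ, 1 ≤ k → ∀ ι : ℕ,
      ‖m - M k‖ ^ 2 ≤ ‖m - M (k - 1)‖ ^ 2 - ⟪m - M (k - 1), v ι⟫ ^ 2) :
    ∀ k : ℕ, 1 ≤ k → ‖m - M k‖ ^ 2 ≤ ‖m - h‖ ^ 2 + 4 * B ^ 2 / ((k : ℝ) + 1) :=
  stmt5_general m M h β v B hβ hBsum hrep hBpos horth hstep
end

section
/- Let p ≥ q ≥ 1 be integers, let Ω be the collection of all q-element subsets of {1,…,p}, a finite set of cardinality N = binom(p,q), and let H be a real inner product space and m ∈ H. For each k ≥ 0 let m_k : Ω^k → H with m_0 = 0 (the constant on the one-point set Ω^0), and write δ_k(ξ) = m − m_k(ξ). Let D : Ω → Set H, let ((β_ι), (v_ι), B) be an ℓ¹-representation of h ∈ H by unit vectors with B > 0, and let c : ℕ → Ω be such that v_ι ∈ D(c(ι)) for every ι. Assume that for every k ≥ 1, every ξ ∈ Ω^{k−1}, and every ω ∈ Ω: (i) ⟨m − m_{k-1}(ξ), m_{k-1}(ξ)⟩ = 0; (ii) ‖δ_k(ξ,ω)‖ ≤ ‖δ_{k-1}(ξ)‖;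 and (iii) for every v ∈ D(ω), ‖δ_k(ξ,ω)‖² ≤ ‖δ_{k-1}(ξ)‖² − ⟨δ_{k-1}(ξ), v⟩². Then for every k ≥ 1, N^{−k} Σ_{ξ∈Ω^k} ‖m − m_k(ξ)‖² ≤ ‖m − h‖² + 4(N·B)² / (k + 1). -/
/-!
Write `δ = m - m_k(ξ)` for the current residual. Since `m_k(ξ)` is orthogonal to `δ`,
`‖δ‖² - ‖m - h‖² ≤ 2⟪δ, h⟫ ≤ 2B · sup_ι ⟪δ, v_ι⟫`, and the dictionary element `v_ι` is available
for the choice `ω = c ι`. Hence averaging over the next choice `ω` lowers `‖δ‖²` by at least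
`(‖δ‖² - ‖m - h‖²)₊² / (4 N B²)`. By Jensen's inequality the averages
`A k = 𝔼_ξ ‖m - m_k(ξ)‖² - ‖m - h‖²` satisfy `A (k + 1) ≤ A k - (A k)₊² / (4 N B²)`, and every
such sequence satisfies `A k ≤ 4 N B² / (k + 1) ≤ 4 (N B)² / (k + 1)` for `k ≥ 1`.
-/

open scoped RealInnerProductSpace

abbrev QSubsets (p q : ℕ) : Type := {s : Finset (Fin p) // s.card = q}

open Finset
open scoped BigOperators

lemma sub_max_sq_div_le_div_four {C : ℝ} (hC : 0 < C) (x : ℝ) : x - max x 0 ^ 2 / C ≤ C / 4 := by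
  rcases le_total x 0 with hx | hx
  · rw [max_eq_right hx, zero_pow two_ne_zero, zero_div, sub_zero]
    linarith
  · have e : C / 4 - (x - x ^ 2 / C) = (x - C / 2) ^ 2 / C := by field_simp; ring
    have : 0 ≤ (x - C / 2) ^ 2 / C := by positivity
    rw [max_eq_left hx]
    linarith

lemma monotoneOn_sub_sq_div {C : ℝ} (hC : 0 < C) :
    MonotoneOn (fun x : ℝ => x - x ^ 2 / C) (Set.Icc 0 (C / 2)) := by
  rintro x ⟨-, hxC⟩ y ⟨-, hyC⟩ hxy
  have e : (y - y ^ 2 / C) - (x - x ^ 2 / C) = (y - x) * (C - x - y) / C := by field_simp; ring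
  have : 0 ≤ (y - x) * (C - x - y) / C :=
    div_nonneg (mul_nonneg (by linarith) (by linarith)) hC.le
  simp only
  linarith

theorem le_div_add_two_of_le_sub_max_sq_div {C : ℝ} (hC : 0 < C) {A : ℕ → ℝ}
    (hA : ∀ k, A (k + 1) ≤ A k - max (A k) 0 ^ 2 / C) (k : ℕ) :
    A (k + 1) ≤ C / (k + 2) := by
  induction k with
  | zero =>
    rw [Nat.cast_zero, zero_add]
    linarith [hA 0, sub_max_sq_div_le_div_four hC (A 0)]
  | succ k ih =>
    have hstep := hA (k + 1)
    push_cast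
    rcases le_total (A (k + 1)) 0 with hneg | hpos
    · have : 0 ≤ C / (k + 1 + 2) := by positivity
      have : 0 ≤ max (A (k + 1)) 0 ^ 2 / C := by positivity
      linarith
    · rw [max_eq_left hpos] at hstep
      have hy : C / (k + 2) ≤ C / 2 := div_le_div_of_nonneg_left hC.le two_pos (by linarith)
      have hmono := monotoneOn_sub_sq_div hC ⟨hpos, ih.trans hy⟩ ⟨by positivity, hy⟩ ih
      calc A (k + 1 + 1) ≤ C / (k + 2) - (C / (k + 2)) ^ 2 / C := hstep.trans hmono
        _ = C * (k + 1) / (k + 2) ^ 2 := by field_simp; ring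
        _ ≤ C / (k + 1 + 2) := by
          rw [div_le_div_iff₀ (by positivity) (by positivity)]
          nlinarith

lemma sum_le_card_mul_sub {Ω : Type*} [Fintype Ω] {f : Ω → ℝ} {a d : ℝ} (ω₀ : Ω)
    (hf : ∀ ω, f ω ≤ a) (hω₀ : f ω₀ ≤ a - d) : ∑ ω, f ω ≤ Fintype.card Ω * a - d := by
  have := single_le_sum (f := fun ω => a - f ω) (fun ω _ => sub_nonneg.2 (hf ω)) (mem_univ ω₀)
  simp only [sum_sub_distrib, sum_const, card_univ, nsmul_eq_mul] at this
  linarith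

lemma expect_fin_snoc {Ω M : Type*} [Fintype Ω] [AddCommMonoid M] [Module ℚ≥0 M] {k : ℕ}
    (G : (Fin (k + 1) → Ω) → M) : 𝔼 ξ, G ξ = 𝔼 ξ : Fin k → Ω, 𝔼 ω, G (Fin.snoc ξ ω) := by
  rw [← Fintype.expect_equiv (Fin.snocEquiv fun _ => Ω) (fun p => G (Fin.snoc p.2 p.1)) G
    fun _ => rfl, ← univ_product_univ, expect_product' univ univ fun ω ξ => G (Fin.snoc ξ ω),
    expect_comm]

lemma one_div_card_pow_mul_sum_eq_expect {Ω : Type*} [Fintype Ω] {N : ℕ}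
    (hN : Fintype.card Ω = N) (k : ℕ) (g : (Fin k → Ω) → ℝ) :
    1 / (N : ℝ) ^ k * ∑ ξ, g ξ = 𝔼 ξ, g ξ := by
  rw [Fintype.expect_eq_sum_div_card, Fintype.card_fun, Fintype.card_fin, hN]
  push_cast
  ring

lemma sq_expect_le_expect_sq {ι : Type*} [Fintype ι] [Nonempty ι] (f : ι → ℝ) :
    (𝔼 i, f i) ^ 2 ≤ 𝔼 i, f i ^ 2 := by
  simpa [Fintype.expect_const] using expect_mul_sq_le_sq_mul_sq univ f 1

theorem expect_le_of_expect_snoc_le {Ω : Type*} [Fintype Ω] [Nonempty Ω] {k : ℕ} {C r : ℝ}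
    (hC : 0 ≤ C) (F : (Fin k → Ω) → ℝ) (G : (Fin (k + 1) → Ω) → ℝ)
    (hFG : ∀ ξ, 𝔼 ω, G (Fin.snoc ξ ω) ≤ F ξ - max (F ξ - r) 0 ^ 2 / C) :
    𝔼 ξ, G ξ ≤ 𝔼 ξ, F ξ - max (𝔼 ξ, F ξ - r) 0 ^ 2 / C := by
  have hJensen : max (𝔼 ξ, F ξ - r) 0 ^ 2 ≤ 𝔼 ξ, max (F ξ - r) 0 ^ 2 := by
    have hle : max (𝔼 ξ, F ξ - r) 0 ≤ 𝔼 ξ, max (F ξ - r) 0 := by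
      refine max_le ?_ (expect_nonneg fun ξ _ => le_max_right _ _)
      calc 𝔼 ξ, F ξ - r = 𝔼 ξ, (F ξ - r) := by rw [expect_sub_distrib, Fintype.expect_const]
        _ ≤ _ := expect_le_expect fun ξ _ => le_max_left _ _
    calc _ ≤ (𝔼 ξ, max (F ξ - r) 0) ^ 2 := pow_le_pow_left₀ (le_max_right _ _) hle 2
      _ ≤ _ := sq_expect_le_expect_sq _
  calc 𝔼 ξ, G ξ = 𝔼 ξ, 𝔼 ω, G (Fin.snoc ξ ω) := expect_fin_snoc G
    _ ≤ 𝔼 ξ, (F ξ - max (F ξ - r) 0 ^ 2 / C) := expect_le_expect fun ξ _ => hFG ξ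
    _ = 𝔼 ξ, F ξ - (𝔼 ξ, max (F ξ - r) 0 ^ 2) / C := by rw [expect_sub_distrib, expect_div]
    _ ≤ _ := by gcongr

section InnerProduct

variable {H : Type*} [NormedAddCommGroup H] [InnerProductSpace ℝ H]

lemma norm_sq_sub_norm_sub_sq_le_two_mul_inner {δ m : H} (hδ : ⟪δ, m - δ⟫ = 0) (h : H) :
    ‖δ‖ ^ 2 - ‖m - h‖ ^ 2 ≤ 2 * ⟪δ, h⟫ := by
  have hm : ⟪δ, m⟫ = ‖δ‖ ^ 2 := by
    rw [← real_inner_self_eq_norm_sq, ← add_zero ⟪δ, δ⟫, ← hδ, ← inner_add_right,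
      add_sub_cancel]
  have hcs : ⟪δ, m - h⟫ ≤ ‖δ‖ * ‖m - h‖ := real_inner_le_norm δ (m - h)
  rw [inner_sub_right, hm] at hcs
  nlinarith [sq_nonneg (‖δ‖ - ‖m - h‖)]

lemma inner_le_mul_of_hasSum {ι : Type*} {β : ι → ℝ} {v : ι → H} {B r : ℝ} {h x : H}
    (hβ : ∀ i, 0 ≤ β i) (hB : HasSum β B) (hh : HasSum (fun i => β i • v i) h)
    (hr : ∀ i, ⟪x, v i⟫ ≤ r) : ⟪x, h⟫ ≤ B * r := by
  have hx : HasSum (fun i => β i * ⟪x, v i⟫) ⟪x, h⟫ := by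
    simpa [real_inner_smul_right] using (innerSL ℝ x).hasSum hh
  exact hasSum_le (fun i => mul_le_mul_of_nonneg_left (hr i) (hβ i)) hx (hB.mul_right r)

variable {Ω ι : Type*} [Fintype Ω] {m h δ : H} {β : ι → ℝ} {v : ι → H} {B : ℝ}

theorem sum_le_of_greedy_step (hβ : ∀ i, 0 ≤ β i) (hB : HasSum β B)
    (hh : HasSum (fun i => β i • v i) h) (hδ : ⟪δ, m - δ⟫ = 0) (c : ι → Ω) (f : Ω → ℝ)
    (hf : ∀ ω, f ω ≤ ‖δ‖ ^ 2) (hc : ∀ i, f (c i) ≤ ‖δ‖ ^ 2 - ⟪δ, v i⟫ ^ 2) :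
    ∑ ω, f ω ≤ Fintype.card Ω * ‖δ‖ ^ 2 - max (‖δ‖ ^ 2 - ‖m - h‖ ^ 2) 0 ^ 2 / (4 * B ^ 2) := by
  set Z := Fintype.card Ω * ‖δ‖ ^ 2 - ∑ ω, f ω
  have hZ0 : 0 ≤ Z := by
    have := sum_le_card_nsmul univ f _ fun ω _ => hf ω
    simp only [card_univ, nsmul_eq_mul] at this
    simp only [Z]
    linarith
  have hZ : ∀ i, ⟪δ, v i⟫ ^ 2 ≤ Z := fun i => by
    have := sum_le_card_mul_sub (c i) hf (hc i)
    simp only [Z]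
    linarith
  have hB0 : 0 ≤ B := hasSum_le hβ hasSum_zero hB
  have hle : max (‖δ‖ ^ 2 - ‖m - h‖ ^ 2) 0 / 2 ≤ B * √Z := by
    refine div_le_of_le_mul₀ zero_le_two (by positivity) (max_le ?_ (by positivity))
    calc ‖δ‖ ^ 2 - ‖m - h‖ ^ 2 ≤ 2 * ⟪δ, h⟫ := norm_sq_sub_norm_sub_sq_le_two_mul_inner hδ h
      _ ≤ 2 * (B * √Z) := by
        gcongr
        exact inner_le_mul_of_hasSum hβ hB hh fun i => Real.le_sqrt_of_sq_le (hZ i)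
      _ = B * √Z * 2 := by ring
  have hsq : (max (‖δ‖ ^ 2 - ‖m - h‖ ^ 2) 0 / 2) ^ 2 ≤ Z * B ^ 2 :=
    calc _ ≤ (B * √Z) ^ 2 := pow_le_pow_left₀ (by positivity) hle 2
      _ = Z * B ^ 2 := by rw [mul_pow, Real.sq_sqrt hZ0, mul_comm]
  have : max (‖δ‖ ^ 2 - ‖m - h‖ ^ 2) 0 ^ 2 / (4 * B ^ 2) ≤ Z := by
    rw [show (4 : ℝ) * B ^ 2 = 2 ^ 2 * B ^ 2 by norm_num, ← div_div, ← div_pow]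
    exact div_le_of_le_mul₀ (by positivity) hZ0 hsq
  linarith

theorem expect_le_of_greedy_step [Nonempty Ω] (hβ : ∀ i, 0 ≤ β i) (hB : HasSum β B)
    (hh : HasSum (fun i => β i • v i) h) (hδ : ⟪δ, m - δ⟫ = 0) (c : ι → Ω) (f : Ω → ℝ)
    (hf : ∀ ω, f ω ≤ ‖δ‖ ^ 2) (hc : ∀ i, f (c i) ≤ ‖δ‖ ^ 2 - ⟪δ, v i⟫ ^ 2) :
    𝔼 ω, f ω ≤ ‖δ‖ ^ 2 - max (‖δ‖ ^ 2 - ‖m - h‖ ^ 2) 0 ^ 2 / (4 * Fintype.card Ω * B ^ 2) := by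
  have hN : (0 : ℝ) < Fintype.card Ω := by exact_mod_cast Fintype.card_pos
  rw [Fintype.expect_eq_sum_div_card, div_le_iff₀ hN]
  refine (sum_le_of_greedy_step hβ hB hh hδ c f hf hc).trans (le_of_eq ?_)
  field_simp

end InnerProduct

theorem stmt6_general (p q : ℕ) (hqp : q ≤ p)
    {H : Type*} [NormedAddCommGroup H] [InnerProductSpace ℝ H]
    (m : H) (M : (k : ℕ) → (Fin k → QSubsets p q) → H)
    (D : QSubsets p q → Set H)
    (h : H) (β : ℕ → ℝ) (v : ℕ → H) (B : ℝ)
    (hβ : ∀ ι, 0 ≤ β ι) (hBsum : HasSum β B)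
    (hrep : HasSum (fun ι => β ι • v ι) h) (hBpos : 0 < B)
    (c : ℕ → QSubsets p q) (hc : ∀ ι, v ι ∈ D (c ι))
    (horth : ∀ (k : ℕ) (ξ : Fin k → QSubsets p q), ⟪m - M k ξ, M k ξ⟫ = 0)
    (hmono : ∀ (k : ℕ) (ξ : Fin k → QSubsets p q) (ω : QSubsets p q),
      ‖m - M (k + 1) (Fin.snoc ξ ω)‖ ≤ ‖m - M k ξ‖)
    (hstep : ∀ (k : ℕ) (ξ : Fin k → QSubsets p q) (ω : QSubsets p q),
      ∀ u ∈ D ω,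
        ‖m - M (k + 1) (Fin.snoc ξ ω)‖ ^ 2 ≤ ‖m - M k ξ‖ ^ 2 - ⟪m - M k ξ, u⟫ ^ 2) :
    ∀ k : ℕ, 1 ≤ k →
      (1 / ((p.choose q : ℝ)) ^ k) * ∑ ξ : Fin k → QSubsets p q, ‖m - M k ξ‖ ^ 2 ≤
        ‖m - h‖ ^ 2 + 4 * ((p.choose q : ℝ) * B) ^ 2 / ((k : ℝ) + 1) := by
  have hcard : Fintype.card (QSubsets p q) = p.choose q := by simp [Fintype.card_finset_len]
  have hN : (1 : ℝ) ≤ p.choose q := by exact_mod_cast Nat.choose_pos hqp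
  have : Nonempty (QSubsets p q) := Fintype.card_pos_iff.1 (hcard ▸ Nat.choose_pos hqp)
  set A : ℕ → ℝ := fun k => 𝔼 ξ : Fin k → QSubsets p q, ‖m - M k ξ‖ ^ 2 - ‖m - h‖ ^ 2
  have hA : ∀ k, A (k + 1) ≤ A k - max (A k) 0 ^ 2 / (4 * p.choose q * B ^ 2) := fun k => by
    have := expect_le_of_expect_snoc_le (C := 4 * p.choose q * B ^ 2) (r := ‖m - h‖ ^ 2)
      (by positivity) (fun ξ => ‖m - M k ξ‖ ^ 2) (fun ξ => ‖m - M (k + 1) ξ‖ ^ 2) fun ξ => by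
        simpa [hcard] using expect_le_of_greedy_step hβ hBsum hrep (m := m) (δ := m - M k ξ)
          (by simpa using horth k ξ) c _ (fun ω => pow_le_pow_left₀ (norm_nonneg _) (hmono k ξ ω) 2)
          (fun i => hstep k ξ (c i) (v i) (hc i))
    simp only [A]
    linarith
  rintro k hk
  obtain ⟨j, rfl⟩ := Nat.exists_eq_add_of_le' hk
  have hNB : 4 * p.choose q * B ^ 2 ≤ 4 * ((p.choose q : ℝ) * B) ^ 2 := by
    rw [mul_pow, ← mul_assoc]
    gcongr
    nlinarith
  rw [one_div_card_pow_mul_sum_eq_expect hcard]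
  calc 𝔼 ξ, ‖m - M (j + 1) ξ‖ ^ 2 = A (j + 1) + ‖m - h‖ ^ 2 := by simp only [A, sub_add_cancel]
    _ ≤ ‖m - h‖ ^ 2 + 4 * p.choose q * B ^ 2 / (j + 2) := by
        linarith [le_div_add_two_of_le_sub_max_sq_div (by positivity) hA j]
    _ ≤ _ := by
      rw [show ((j + 1 : ℕ) : ℝ) + 1 = j + 2 by push_cast; ring]
      gcongr

/-- Theorem 2 of the paper for rPPR.oga: averaging over uniformly chosen random
subsets `ξ ∈ Ω^k`, the orthogonal-greedy iterates satisfy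
`N^{-k} Σ_ξ ‖m - m_k(ξ)‖² ≤ ‖m - h‖² + 4(N B)²/(k+1)` with `N = binom(p,q)`. -/
theorem stmt6 (p q : ℕ) (hq : 1 ≤ q) (hqp : q ≤ p)
    {H : Type*} [NormedAddCommGroup H] [InnerProductSpace ℝ H]
    (m : H) (M : (k : ℕ) → (Fin k → QSubsets p q) → H)
    (hM0 : ∀ ξ, M 0 ξ = 0)
    (D : QSubsets p q → Set H)
    (h : H) (β : ℕ → ℝ) (v : ℕ → H) (B : ℝ)
    (hβ : ∀ ι, 0 ≤ β ι) (hBsum : HasSum β B) (hv : ∀ ι, ‖v ι‖ = 1)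
    (hrep : HasSum (fun ι => β ι • v ι) h) (hBpos : 0 < B)
    (c : ℕ → QSubsets p q) (hc : ∀ ι, v ι ∈ D (c ι))
    (horth : ∀ (k : ℕ) (ξ : Fin k → QSubsets p q), ⟪m - M k ξ, M k ξ⟫ = 0)
    (hmono : ∀ (k : ℕ) (ξ : Fin k → QSubsets p q) (ω : QSubsets p q),
      ‖m - M (k + 1) (Fin.snoc ξ ω)‖ ≤ ‖m - M k ξ‖)
    (hstep : ∀ (k : ℕ) (ξ : Fin k → QSubsets p q) (ω : QSubsets p q),
      ∀ u ∈ D ω,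
        ‖m - M (k + 1) (Fin.snoc ξ ω)‖ ^ 2 ≤ ‖m - M k ξ‖ ^ 2 - ⟪m - M k ξ, u⟫ ^ 2) :
    ∀ k : ℕ, 1 ≤ k →
      (1 / ((p.choose q : ℝ)) ^ k) * ∑ ξ : Fin k → QSubsets p q, ‖m - M k ξ‖ ^ 2 ≤
        ‖m - h‖ ^ 2 + 4 * ((p.choose q : ℝ) * B) ^ 2 / ((k : ℝ) + 1) :=
  stmt6_general p q hqp m M D h β v B hβ hBsum hrep hBpos c hc horth hmono hstep
end
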